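/- arXiv:1803.07002 — 7 statements merged into one kernel-verified Lean document; each statement's English description precedes it below -/
import Mathlib

section
/- Let $\epsilon: X^0\xrightarrow{\xi^0} X^1\to\cdots\to X^d\xrightarrow{\xi^d} X^{d+1}\xrightarrow{\xi^{d+1}}\Sigma^d X^0$ be a $(d+2)$-angle in a Hom-finite Krull-Schmidt $k$-linear $(d+2)$-angulated category. Then $\xi^1$ is right minimal if and only if $\xi^0$ lies in the radical of $\mathcal{M}$. -/
open CategoryTheory CategoryTheory.Limits

universe v u

/-- A candidate `(d+2)`-angle: objects `X 0, …, X (d+1)`, morphisms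
`mor i : X i ⟶ X (i+1)` (relevant for `i = 0, …, d`) and the connecting morphism
`conn : X (d+1) ⟶ Σᵈ (X 0)`. -/
structure DAngle (C : Type u) [Category.{v} C] [Preadditive C] (d : ℕ) (S : C ⥤ C) where
  X : ℕ → C
  mor : ∀ i, X i ⟶ X (i + 1)
  conn : X (d + 1) ⟶ S.obj (X 0)

/-- An axiomatization of a `(d+2)`-angulated category in the sense of
Geiss–Keller–Oppermann: an additive category with an automorphism `S = Σᵈ`
(given together with an inverse) and a class of `(d+2)`-angles, for which we
record those consequences of the axioms (N1)–(N4) that are used here: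
the induced covariant and contravariant long exact `Hom`-sequences, and the
extension axiom (part of (N1)). -/
structure DAngulated (C : Type u) [Category.{v} C] [Preadditive C] (d : ℕ) where
  /-- the suspension `Σᵈ` -/
  S : C ⥤ C
  /-- the inverse suspension `Σ⁻ᵈ` -/
  Sinv : C ⥤ C
  SinvS : Sinv ⋙ S ≅ 𝟭 C
  SSinv : S ⋙ Sinv ≅ 𝟭 C
  /-- the distinguished class of `(d+2)`-angles -/
  isAngle : DAngle C d S → Prop
  /-- covariant exactness at `X (i+1)` for `0 ≤ i ≤ d - 1` -/
  exact_cov : ∀ E : DAngle C d S, isAngle E → ∀ i, i + 1 ≤ d →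
    ∀ (A : C) (g : A ⟶ E.X (i + 1)),
      g ≫ E.mor (i + 1) = 0 ↔ ∃ h : A ⟶ E.X i, h ≫ E.mor i = g
  /-- covariant exactness at `X (d+1)` -/
  exact_cov_top : ∀ E : DAngle C d S, isAngle E →
    ∀ (A : C) (g : A ⟶ E.X (d + 1)),
      g ≫ E.conn = 0 ↔ ∃ h : A ⟶ E.X d, h ≫ E.mor d = g
  /-- covariant exactness at `Σᵈ (X 0)` -/
  exact_cov_shift : ∀ E : DAngle C d S, isAngle E →
    ∀ (A : C) (g : A ⟶ S.obj (E.X 0)),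
      g ≫ S.map (E.mor 0) = 0 ↔ ∃ h : A ⟶ E.X (d + 1), h ≫ E.conn = g
  /-- contravariant exactness at `X 0` -/
  exact_contra_bot : ∀ E : DAngle C d S, isAngle E →
    ∀ (A : C) (φ : E.X 0 ⟶ A),
      E.conn ≫ S.map φ = 0 ↔ ∃ ψ : E.X 1 ⟶ A, E.mor 0 ≫ ψ = φ
  /-- contravariant exactness at `X (i+1)` for `0 ≤ i ≤ d - 1` -/
  exact_contra : ∀ E : DAngle C d S, isAngle E → ∀ i, i + 1 ≤ d →
    ∀ (A : C) (φ : E.X (i + 1) ⟶ A),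
      E.mor i ≫ φ = 0 ↔ ∃ ψ : E.X (i + 2) ⟶ A, E.mor (i + 1) ≫ ψ = φ
  /-- contravariant exactness at `X (d+1)` -/
  exact_contra_top : ∀ E : DAngle C d S, isAngle E →
    ∀ (A : C) (φ : E.X (d + 1) ⟶ A),
      E.mor d ≫ φ = 0 ↔ ∃ ψ : S.obj (E.X 0) ⟶ A, E.conn ≫ ψ = φ
  /-- every morphism `B ⟶ Σᵈ A` is the connecting morphism of some `(d+2)`-angle
  (part of (N1)) -/
  extend : ∀ {A B : C} (f : B ⟶ S.obj A),
    ∃ E : DAngle C d S, isAngle E ∧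
      ∃ (h0 : E.X 0 = A) (h1 : E.X (d + 1) = B),
        E.conn = eqToHom h1 ≫ f ≫ eqToHom (congrArg S.obj h0.symm)

variable {C : Type u} [Category.{v} C] [Preadditive C]

/-- A morphism `f : X ⟶ Y` lies in the (Jacobson) radical of the category if
`𝟙 X - g ∘ f` is invertible for every `g : Y ⟶ X`. -/
def InRad {X Y : C} (f : X ⟶ Y) : Prop :=
  ∀ g : Y ⟶ X, IsIso (𝟙 X - f ≫ g)

/-- A morphism `f : X ⟶ Y` is right minimal if every `φ : X ⟶ X` with
`f ∘ φ = f` is an isomorphism. -/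
def RightMinimal {X Y : C} (f : X ⟶ Y) : Prop :=
  ∀ φ : X ⟶ X, φ ≫ f = f → IsIso φ

/-- A morphism `f : X ⟶ Y` is left minimal if every `ν : Y ⟶ Y` with
`ν ∘ f = f` is an isomorphism. -/
def LeftMinimal {X Y : C} (f : X ⟶ Y) : Prop :=
  ∀ ν : Y ⟶ Y, f ≫ ν = f → IsIso ν

/-- `f : X ⟶ Y` is left almost split in the subcategory given by the predicate
`W`: it is not a split monomorphism, and every morphism `X ⟶ Z` with `Z` in `W`
which is not a split monomorphism factors through `f`. -/
def LeftAlmostSplit (W : C → Prop) {X Y : C} (f : X ⟶ Y) : Prop :=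
  ¬ IsSplitMono f ∧
    ∀ (Z : C), W Z → ∀ g : X ⟶ Z, ¬ IsSplitMono g → ∃ h : Y ⟶ Z, f ≫ h = g

/-- `f : X ⟶ Y` is right almost split in the subcategory given by the predicate
`W`: it is not a split epimorphism, and every morphism `Z ⟶ Y` with `Z` in `W`
which is not a split epimorphism factors through `f`. -/
def RightAlmostSplit (W : C → Prop) {X Y : C} (f : X ⟶ Y) : Prop :=
  ¬ IsSplitEpi f ∧
    ∀ (Z : C), W Z → ∀ g : Z ⟶ Y, ¬ IsSplitEpi g → ∃ h : Z ⟶ X, h ≫ f = g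

/-- An Auslander–Reiten `(d+2)`-angle in the ambient category: a `(d+2)`-angle
whose first morphism is left almost split, whose `d`-th morphism is right almost
split, and whose middle morphisms `ξ¹, …, ξ^{d-1}` lie in the radical. -/
def IsARAngle {d : ℕ} (T : DAngulated C d) (E : DAngle C d T.S) : Prop :=
  T.isAngle E ∧ LeftAlmostSplit (fun _ => True) (E.mor 0) ∧
    RightAlmostSplit (fun _ => True) (E.mor d) ∧
    ∀ i, 1 ≤ i → i ≤ d - 1 → InRad (E.mor i)

/-- An Auslander–Reiten `(d+2)`-angle in the subcategory given by the predicate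
`W`: a `(d+2)`-angle with all terms in `W`, whose first morphism is left almost
split in `W`, whose `d`-th morphism is right almost split in `W`, and whose
middle morphisms lie in the radical. -/
def IsARAngleIn {d : ℕ} (T : DAngulated C d) (W : C → Prop) (E : DAngle C d T.S) : Prop :=
  T.isAngle E ∧ (∀ i, i ≤ d + 1 → W (E.X i)) ∧
    LeftAlmostSplit W (E.mor 0) ∧ RightAlmostSplit W (E.mor d) ∧
    ∀ i, 1 ≤ i → i ≤ d - 1 → InRad (E.mor i)

/-- `f : V ⟶ X` is a `W`-precover: `V` lies in `W` and every morphism from an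
object of `W` to `X` factors through `f`. -/
def IsWPrecover (W : C → Prop) {V X : C} (f : V ⟶ X) : Prop :=
  W V ∧ ∀ (V' : C), W V' → ∀ g : V' ⟶ X, ∃ h : V' ⟶ V, h ≫ f = g

/-- `f : V ⟶ X` is a `W`-cover: a right minimal `W`-precover. -/
def IsWCover (W : C → Prop) {V X : C} (f : V ⟶ X) : Prop :=
  IsWPrecover W f ∧ RightMinimal f

/-- The subcategory given by the predicate `W` is closed under `d`-extensions:
every morphism `δ : W'' ⟶ Σᵈ W'` with `W', W''` in `W` is the connecting
morphism of a `(d+2)`-angle all of whose middle terms lie in `W`. -/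
def ClosedUnderDExtensions {d : ℕ} (T : DAngulated C d) (W : C → Prop) : Prop :=
  ∀ (W' W'' : C), W W' → W W'' → ∀ δ : W'' ⟶ T.S.obj W',
    ∃ E : DAngle C d T.S, T.isAngle E ∧ (∀ i, 1 ≤ i → i ≤ d → W (E.X i)) ∧
      ∃ (h0 : E.X 0 = W') (h1 : E.X (d + 1) = W''),
        E.conn = eqToHom h1 ≫ δ ≫ eqToHom (congrArg T.S.obj h0.symm)

/-- The predicate `W` defines an additive subcategory: it contains the zero
objects and is closed under isomorphisms, finite biproducts and retracts
(direct summands). -/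
def IsAdditiveSubcat [HasZeroObject C] [HasBinaryBiproducts C] (W : C → Prop) : Prop :=
  (∀ X : C, IsZero X → W X) ∧
  (∀ X Y : C, (X ≅ Y) → W X → W Y) ∧
  (∀ X Y : C, W X → W Y → W (X ⊞ Y)) ∧
  (∀ (X Y : C) (i : X ⟶ Y) (p : Y ⟶ X), i ≫ p = 𝟙 X → W Y → W X)

private theorem isIso_swap {C : Type u} [Category.{v} C] [Preadditive C]
    {X Y : C} (f : X ⟶ Y) (g : Y ⟶ X) (h : IsIso (𝟙 X - f ≫ g)) :
    IsIso (𝟙 Y - g ≫ f) := by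
  set u := inv (𝟙 X - f ≫ g) with hu
  have h1 : u - f ≫ g ≫ u = 𝟙 X := by
    have := IsIso.inv_hom_id (𝟙 X - f ≫ g)
    rw [← hu] at this
    calc u - f ≫ g ≫ u = (𝟙 X - f ≫ g) ≫ u := by
          simp [Preadditive.sub_comp, Category.assoc]
      _ = 𝟙 X := IsIso.hom_inv_id _
  have h2 : u - u ≫ f ≫ g = 𝟙 X := by
    calc u - u ≫ f ≫ g = u ≫ (𝟙 X - f ≫ g) := by
          simp [Preadditive.comp_sub]
      _ = 𝟙 X := IsIso.inv_hom_id _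
  refine ⟨𝟙 Y + g ≫ u ≫ f, ?_, ?_⟩
  · have : (𝟙 Y - g ≫ f) ≫ (𝟙 Y + g ≫ u ≫ f)
        = 𝟙 Y + g ≫ (u - 𝟙 X - f ≫ g ≫ u) ≫ f := by
      simp [Preadditive.sub_comp, Preadditive.comp_sub, Preadditive.add_comp,
        Preadditive.comp_add, Category.assoc]
      abel
    rw [this]
    have : u - 𝟙 X - f ≫ g ≫ u = 0 := by rw [sub_eq_zero, ← h1]; abel
    simp [this]
  · have : (𝟙 Y + g ≫ u ≫ f) ≫ (𝟙 Y - g ≫ f)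
        = 𝟙 Y + g ≫ (u - 𝟙 X - u ≫ f ≫ g) ≫ f := by
      simp [Preadditive.sub_comp, Preadditive.comp_sub, Preadditive.add_comp,
        Preadditive.comp_add, Category.assoc]
      abel
    rw [this]
    have : u - 𝟙 X - u ≫ f ≫ g = 0 := by rw [sub_eq_zero, ← h2]; abel
    simp [this]

/-- In a Hom-finite Krull–Schmidt `k`-linear `(d+2)`-angulated category, for a
`(d+2)`-angle `X⁰ →^{ξ⁰} X¹ →^{ξ¹} X² → ⋯`, the morphism `ξ¹` is right minimal
if and only if `ξ⁰` lies in the radical of the category. -/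
theorem stmt_8 {C : Type u} [Category.{v} C] [Preadditive C]
    (k : Type*) [Field k] [Linear k C]
    (homfin : ∀ X Y : C, FiniteDimensional k (X ⟶ Y))
    [IsIdempotentComplete C]
    {d : ℕ} (hd : 1 ≤ d)
    (T : DAngulated C d) (E : DAngle C d T.S) (hE : T.isAngle E) :
    RightMinimal (E.mor 1) ↔ InRad (E.mor 0) := by
  have hcomp : E.mor 0 ≫ E.mor 1 = 0 := by
    rw [T.exact_cov E hE 0 hd (E.X 0) (E.mor 0)]
    exact ⟨𝟙 _, Category.id_comp _⟩
  constructor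
  · intro hmin g
    have hφ : (𝟙 (E.X 1) - g ≫ E.mor 0) ≫ E.mor 1 = E.mor 1 := by
      simp [Preadditive.sub_comp, Category.assoc, hcomp]
    have := hmin _ hφ
    exact isIso_swap g (E.mor 0) this
  · intro hrad φ hφ
    have h0 : (𝟙 (E.X 1) - φ) ≫ E.mor 1 = 0 := by
      simp [Preadditive.sub_comp, hφ]
    obtain ⟨h, hh⟩ := (T.exact_cov E hE 0 hd (E.X 1) (𝟙 (E.X 1) - φ)).mp h0
    have hφ' : φ = 𝟙 (E.X 1) - h ≫ E.mor 0 := by rw [hh]; abel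
    rw [hφ']
    exact isIso_swap (E.mor 0) h (hrad h)
end

section
/- Let $\mathcal{M}$ be a skeletally small Hom-finite $k$-linear $(d+2)$-angulated category with split idempotents, and let $\epsilon: X^0\xrightarrow{\xi^0} X^1\to\cdots\to X^d\xrightarrow{\xi^d} X^{d+1}\xrightarrow{\xi^{d+1}}\Sigma^d X^0$ be an Auslander-Reiten $(d+2)$-angle. Viewing $\mathrm{Hom}(X^{d+1},\Sigma^d X^0)$ as a right $\mathrm{End}(X^{d+1})$-module via composition, its socle is simple and equal to the submodule generated by $\xi^{d+1}$. -/
open CategoryTheory CategoryTheory.Limits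

universe v u

variable {C : Type u} [Category.{v} C] [Preadditive C]

section Socle

variable {C : Type u} [Category.{v} C] [Preadditive C]

/-- `Hom(X, Z)` as a right module over `End(X)` (i.e. a left module over
`End(X)ᵐᵒᵖ`), acting by precomposition. -/
instance homModuleEndMop (X Z : C) : Module (End X)ᵐᵒᵖ (X ⟶ Z) where
  smul e m := e.unop ≫ m
  one_smul m := by
    show ((1 : (End X)ᵐᵒᵖ)).unop ≫ m = m
    rw [MulOpposite.unop_one]
    exact Category.id_comp m
  mul_smul e₁ e₂ m := by
    show (e₂.unop * e₁.unop) ≫ m = e₁.unop ≫ e₂.unop ≫ m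
    simp [End.mul_def]
  smul_zero e := by show e.unop ≫ (0 : X ⟶ Z) = 0; simp
  smul_add e m n := by show e.unop ≫ (m + n) = e.unop ≫ m + e.unop ≫ n; simp
  add_smul e₁ e₂ m := by
    show (e₁.unop + e₂.unop) ≫ m = e₁.unop ≫ m + e₂.unop ≫ m
    exact Preadditive.add_comp _ _ _ _ _ _
  zero_smul m := by show (0 : X ⟶ X) ≫ m = 0; simp

end Socle

/-- For an Auslander–Reiten `(d+2)`-angle
`X⁰ → ⋯ → Xᵈ →^{ξᵈ} Xᵈ⁺¹ →^{ξᵈ⁺¹} Σᵈ X⁰` in a skeletally small Hom-finite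
`k`-linear `(d+2)`-angulated category with split idempotents, the right
`End(Xᵈ⁺¹)`-module `Hom(Xᵈ⁺¹, Σᵈ X⁰)` has simple socle generated by `ξᵈ⁺¹`:
the submodule generated by `ξᵈ⁺¹` is an atom and is contained in every non-zero
submodule. -/
theorem stmt_9 {C : Type u} [Category.{v} C] [Preadditive C]
    (k : Type*) [Field k] [Linear k C]
    (homfin : ∀ X Y : C, FiniteDimensional k (X ⟶ Y))
    [IsIdempotentComplete C]
    {d : ℕ} (hd : 1 ≤ d)
    (T : DAngulated C d) (E : DAngle C d T.S) (hAR : IsARAngle T E) :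
    IsAtom (Submodule.span (End (E.X (d + 1)))ᵐᵒᵖ
        ({E.conn} : Set (E.X (d + 1) ⟶ T.S.obj (E.X 0)))) ∧
    ∀ M : Submodule (End (E.X (d + 1)))ᵐᵒᵖ (E.X (d + 1) ⟶ T.S.obj (E.X 0)),
      M ≠ ⊥ →
      Submodule.span (End (E.X (d + 1)))ᵐᵒᵖ
        ({E.conn} : Set (E.X (d + 1) ⟶ T.S.obj (E.X 0))) ≤ M := by

  obtain ⟨hAngle, hLeft, hRight, _⟩ := hAR
  -- the connecting morphism is nonzero
  have hconn_ne : E.conn ≠ 0 := by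
    intro h
    apply hRight.1
    obtain ⟨s, hs⟩ := (T.exact_cov_top E hAngle _ (𝟙 (E.X (d + 1)))).mp (by simp [h])
    exact ⟨⟨s, hs⟩⟩
  -- key: every nonzero morphism into Σᵈ X⁰ has E.conn in its orbit
  have key : ∀ m : E.X (d + 1) ⟶ T.S.obj (E.X 0), m ≠ 0 →
      ∃ g : E.X (d + 1) ⟶ E.X (d + 1), g ≫ m = E.conn := by
    intro m hm
    obtain ⟨F, hF, h0, h1, hc⟩ := T.extend m
    -- the first morphism of F (transported to E.X 0) is not a split mono
    have hnsm : ¬ IsSplitMono (eqToHom h0.symm ≫ F.mor 0) := by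
      intro hsm
      obtain ⟨⟨s, hs⟩⟩ := hsm
      have hfac : ∃ ψ : F.X 1 ⟶ F.X 0, F.mor 0 ≫ ψ = 𝟙 (F.X 0) := by
        refine ⟨s ≫ eqToHom h0.symm, ?_⟩
        have := hs
        simp only [Category.assoc] at this ⊢
        calc F.mor 0 ≫ s ≫ eqToHom h0.symm
            = eqToHom h0 ≫ (eqToHom h0.symm ≫ F.mor 0 ≫ s) ≫ eqToHom h0.symm := by
              simp
          _ = 𝟙 (F.X 0) := by rw [this]; simp
      have hzero : F.conn ≫ T.S.map (𝟙 (F.X 0)) = 0 :=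
        (T.exact_contra_bot F hF _ (𝟙 (F.X 0))).mpr hfac
      simp only [CategoryTheory.Functor.map_id, Category.comp_id] at hzero
      apply hm
      rw [hc] at hzero
      have : m = 0 := by
        have h' := congrArg (fun t => eqToHom h1.symm ≫ t ≫ eqToHom (congrArg T.S.obj h0)) hzero
        simpa using h'
      exact this
    -- factor it through the left almost split morphism E.mor 0
    obtain ⟨h, hh⟩ := hLeft.2 (F.X 1) trivial (eqToHom h0.symm ≫ F.mor 0) hnsm
    -- hence E.conn kills it
    have hkill : E.conn ≫ T.S.map (eqToHom h0.symm ≫ F.mor 0) = 0 :=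
      (T.exact_contra_bot E hAngle _ (eqToHom h0.symm ≫ F.mor 0)).mpr ⟨h, hh⟩
    -- rewrite: (E.conn ≫ eqToHom) ≫ S.map (F.mor 0) = 0
    have hkill' : (E.conn ≫ eqToHom (congrArg T.S.obj h0.symm)) ≫ T.S.map (F.mor 0) = 0 := by
      rw [Functor.map_comp, eqToHom_map] at hkill
      simpa [Category.assoc] using hkill
    obtain ⟨h', hh'⟩ := (T.exact_cov_shift F hF _
      (E.conn ≫ eqToHom (congrArg T.S.obj h0.symm))).mp hkill'
    refine ⟨h' ≫ eqToHom h1, ?_⟩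
    rw [hc] at hh'
    have := congrArg (fun t => t ≫ eqToHom (congrArg T.S.obj h0)) hh'
    simpa [Category.assoc] using this
  -- membership lemma
  have hmem : ∀ M : Submodule (End (E.X (d + 1)))ᵐᵒᵖ (E.X (d + 1) ⟶ T.S.obj (E.X 0)),
      M ≠ ⊥ →
      Submodule.span (End (E.X (d + 1)))ᵐᵒᵖ
        ({E.conn} : Set (E.X (d + 1) ⟶ T.S.obj (E.X 0))) ≤ M := by
    intro M hM
    obtain ⟨m, hmM, hm⟩ := Submodule.exists_mem_ne_zero_of_ne_bot hM
    obtain ⟨g, hg⟩ := key m hm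
    have hconnM : E.conn ∈ M := by
      have : (MulOpposite.op g : (End (E.X (d + 1)))ᵐᵒᵖ) • m ∈ M :=
        M.smul_mem _ hmM
      have heq : (MulOpposite.op g : (End (E.X (d + 1)))ᵐᵒᵖ) • m = g ≫ m := rfl
      rwa [heq, hg] at this
    rw [Submodule.span_le, Set.singleton_subset_iff]
    exact hconnM
  refine ⟨⟨?_, ?_⟩, hmem⟩
  · intro hbot
    apply hconn_ne
    rw [Submodule.span_singleton_eq_bot] at hbot
    exact hbot
  · intro b hb
    by_contra hbne
    exact absurd (lt_of_lt_of_le hb (hmem b hbne)) (lt_irrefl _)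
end

section
/- Let $\epsilon: X^0\to X^1\to\cdots\to X^d\xrightarrow{\xi^d} X^{d+1}\to\Sigma^d X^0$ be a $(d+2)$-angle in a Hom-finite Krull-Schmidt $k$-linear $(d+2)$-angulated category such that $\xi^d$ is right almost split and (for $d\geq 2$) $\xi^1,\dots,\xi^{d-1}$ lie in the radical. Then the following are equivalent: (a) $\mathrm{End}(X^0)$ is local; (b) $\xi^{d+1}$ is left minimal; (c) $\xi^0$ lies in the radical of $\mathcal{M}$; (d) $\epsilon$ is an Auslander-Reiten $(d+2)$-angle. -/
open CategoryTheory CategoryTheory.Limits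

universe v u

variable {C : Type u} [Category.{v} C] [Preadditive C]

section AuxProofs



variable {C : Type u} [Category.{v} C] [Preadditive C]

/-- In a Hom-finite linear category, a one-sided inverse of an endomorphism is two-sided. -/
private lemma aux_one_sided (k : Type*) [Field k] [Linear k C]
    (homfin : ∀ X Y : C, FiniteDimensional k (X ⟶ Y))
    {X : C} (f r : X ⟶ X) (h : f ≫ r = 𝟙 X) : IsIso f := by
  haveI := homfin X X
  let T : (X ⟶ X) →ₗ[k] (X ⟶ X) :=
    { toFun := fun x => f ≫ x
      map_add' := fun x y => by simp
      map_smul' := fun c x => by simp }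
  have hsurj : Function.Surjective T := by
    intro y
    refine ⟨r ≫ y, ?_⟩
    show f ≫ r ≫ y = y
    rw [← Category.assoc, h, Category.id_comp]
  have hinj : Function.Injective T := LinearMap.injective_iff_surjective.mpr hsurj
  have hrf : r ≫ f = 𝟙 X := by
    apply hinj
    show f ≫ r ≫ f = f ≫ 𝟙 X
    rw [← Category.assoc, h, Category.id_comp, Category.comp_id]
  exact ⟨⟨r, h, hrf⟩⟩

variable {d : ℕ} (T : DAngulated C d)

private lemma aux_equiv : T.S.IsEquivalence :=
  Functor.IsEquivalence.mk' T.Sinv T.SSinv.symm T.SinvS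

private lemma aux_smap_zero (A W : C) : T.S.map (0 : A ⟶ W) = 0 := by
  obtain ⟨G, hG, h0, h1, hc⟩ := T.extend (𝟙 (T.S.obj A))
  subst h0
  haveI : IsIso G.conn := by rw [hc]; infer_instance
  have h2 : G.conn ≫ T.S.map (0 : G.X 0 ⟶ W) = 0 :=
    (T.exact_contra_bot G hG W 0).mpr ⟨0, comp_zero⟩
  rw [← cancel_epi G.conn, comp_zero]
  exact h2

variable {E : DAngle C d T.S}

private lemma aux_conn_ne_zero (hE : T.isAngle E)
    (hras : RightAlmostSplit (fun _ => True) (E.mor d)) : E.conn ≠ 0 := by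
  intro h
  obtain ⟨s, hs⟩ := (T.exact_cov_top E hE (E.X (d + 1)) (𝟙 _)).mp (by rw [h, comp_zero])
  exact hras.1 ⟨⟨⟨s, hs⟩⟩⟩

private lemma aux_mor0_nsm (hE : T.isAngle E)
    (hras : RightAlmostSplit (fun _ => True) (E.mor d)) : ¬ IsSplitMono (E.mor 0) := by
  intro hsm
  have h2 : E.conn ≫ T.S.map (𝟙 (E.X 0)) = 0 :=
    (T.exact_contra_bot E hE (E.X 0) (𝟙 _)).mpr ⟨retraction (E.mor 0), IsSplitMono.id _⟩
  rw [T.S.map_id, Category.comp_id] at h2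
  exact aux_conn_ne_zero T hE hras h2

/-- The key factorization lemma: if `ξᵈ` is right almost split and `ξᵈ⁺¹` is left minimal,
then every morphism out of `X⁰` that is not a split monomorphism factors through `ξ⁰`. -/
private lemma aux_key (hE : T.isAngle E)
    (hras : RightAlmostSplit (fun _ => True) (E.mor d))
    (hb : LeftMinimal E.conn) {Z : C} (u : E.X 0 ⟶ Z) (hu : ¬ IsSplitMono u) :
    ∃ ψ : E.X 1 ⟶ Z, E.mor 0 ≫ ψ = u := by
  haveI := aux_equiv T
  obtain ⟨F, hF, h0, h1, hc⟩ := T.extend (E.conn ≫ T.S.map u)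
  subst h0
  have hc' : F.conn = eqToHom h1 ≫ E.conn ≫ T.S.map u := by
    rw [hc]
    simp only [eqToHom_refl, Category.comp_id, Category.assoc]
  by_cases hse : IsSplitEpi (F.mor d ≫ eqToHom h1)
  · have hFd : F.mor d ≫ F.conn = 0 :=
      (T.exact_cov_top F hF (F.X d) (F.mor d)).mpr ⟨𝟙 _, Category.id_comp _⟩
    rw [hc'] at hFd
    have hδ : E.conn ≫ T.S.map u = 0 := by
      haveI := hse
      calc E.conn ≫ T.S.map u
          = (section_ (F.mor d ≫ eqToHom h1) ≫ (F.mor d ≫ eqToHom h1)) ≫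
              E.conn ≫ T.S.map u := by rw [IsSplitEpi.id, Category.id_comp]
        _ = section_ (F.mor d ≫ eqToHom h1) ≫ F.mor d ≫ eqToHom h1 ≫
              E.conn ≫ T.S.map u := by simp only [Category.assoc]
        _ = 0 := by rw [hFd, comp_zero]
    exact (T.exact_contra_bot E hE (F.X 0) u).mp hδ
  · exfalso
    obtain ⟨γ, hγ⟩ := hras.2 (F.X d) trivial (F.mor d ≫ eqToHom h1) hse
    have hEd : E.mor d ≫ E.conn = 0 :=
      (T.exact_cov_top E hE (E.X d) (E.mor d)).mpr ⟨𝟙 _, Category.id_comp _⟩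
    have h4 : F.mor d ≫ eqToHom h1 ≫ E.conn = 0 := by
      rw [← Category.assoc, ← hγ, Category.assoc, hEd, comp_zero]
    obtain ⟨ψ', hψ'⟩ :=
      (T.exact_contra_top F hF (T.S.obj (E.X 0)) (eqToHom h1 ≫ E.conn)).mp h4
    rw [hc'] at hψ'
    have h5 : E.conn ≫ T.S.map u ≫ ψ' = E.conn :=
      (cancel_epi (eqToHom h1)).mp (by simpa only [Category.assoc] using hψ')
    obtain ⟨r, hr⟩ := T.S.map_surjective ψ'
    have h6 : E.conn ≫ T.S.map (u ≫ r) = E.conn := by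
      rw [T.S.map_comp, hr]
      exact h5
    haveI : IsIso (T.S.map (u ≫ r)) := hb _ h6
    haveI : IsIso (u ≫ r) := isIso_of_reflects_iso (u ≫ r) T.S
    exact hu (IsSplitMono.mk' ⟨r ≫ inv (u ≫ r), by
      rw [← Category.assoc]
      exact IsIso.hom_inv_id _⟩)

/-- If every non-split-mono endomorphism of `X⁰` factors through `ξ⁰`,
then `End X⁰` is local. -/
private lemma aux_factor_to_a (k : Type*) [Field k] [Linear k C]
    (homfin : ∀ X Y : C, FiniteDimensional k (X ⟶ Y))
    (hE : T.isAngle E) (hras : RightAlmostSplit (fun _ => True) (E.mor d))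
    (hfac : ∀ g : E.X 0 ⟶ E.X 0, ¬ IsSplitMono g → ∃ ψ : E.X 1 ⟶ E.X 0, E.mor 0 ≫ ψ = g) :
    IsLocalRing (End (E.X 0)) := by
  have hnsm := aux_mor0_nsm T hE hras
  haveI : Nontrivial (End (E.X 0)) := by
    refine ⟨1, 0, fun h => hnsm ?_⟩
    refine IsSplitMono.mk' ⟨0, ?_⟩
    rw [comp_zero]
    exact h.symm
  refine ⟨fun {a b} hab => ?_⟩
  by_contra hcon
  push_neg at hcon
  obtain ⟨ha, h1a⟩ := hcon
  have hna : ¬ IsSplitMono (a : E.X 0 ⟶ E.X 0) := by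
    intro hs
    exact ha ((isUnit_iff_isIso a).mpr
      (aux_one_sided k homfin a (retraction a) (IsSplitMono.id a)))
  have hn1a : ¬ IsSplitMono (b : E.X 0 ⟶ E.X 0) := by
    intro hs
    exact h1a ((isUnit_iff_isIso _).mpr
      (aux_one_sided k homfin _ (retraction _) (IsSplitMono.id _)))
  obtain ⟨ψ₁, hψ₁⟩ := hfac (a : E.X 0 ⟶ E.X 0) hna
  obtain ⟨ψ₂, hψ₂⟩ := hfac (b : E.X 0 ⟶ E.X 0) hn1a
  apply hnsm
  refine IsSplitMono.mk' ⟨ψ₁ + ψ₂, ?_⟩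
  rw [Preadditive.comp_add, hψ₁, hψ₂]
  exact hab

private lemma aux_a_to_c (hE : T.isAngle E)
    (hras : RightAlmostSplit (fun _ => True) (E.mor d))
    (ha : IsLocalRing (End (E.X 0))) : InRad (E.mor 0) := by
  intro g
  let aE : End (E.X 0) := E.mor 0 ≫ g
  have haux : aE + ((1 : End (E.X 0)) - aE) = (1 : End (E.X 0)) := by abel
  rcases IsLocalRing.isUnit_or_isUnit_of_add_one (R := End (E.X 0)) haux with h | h
  · exfalso
    apply aux_mor0_nsm T hE hras
    haveI : IsIso (E.mor 0 ≫ g) := (isUnit_iff_isIso (X := E.X 0) aE).mp h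
    exact IsSplitMono.mk' ⟨g ≫ inv (E.mor 0 ≫ g), by
      rw [← Category.assoc]
      exact IsIso.hom_inv_id _⟩
  · have h2 := (isUnit_iff_isIso (X := E.X 0) ((1 : End (E.X 0)) - aE)).mp h
    exact h2

/-- If `ξ⁰` is in the radical, any idempotent of `Σᵈ X⁰` killed by `ξᵈ⁺¹` vanishes. -/
private lemma aux_idem [IsIdempotentComplete C] (hE : T.isAngle E)
    (hcrad : InRad (E.mor 0))
    (e : T.S.obj (E.X 0) ⟶ T.S.obj (E.X 0)) (he : e ≫ e = e)
    (h0 : E.conn ≫ e = 0) : e = 0 := by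
  haveI := aux_equiv T
  obtain ⟨ε, hεe⟩ := T.S.map_surjective e
  have hε2 : ε ≫ ε = ε := T.S.map_injective (by rw [T.S.map_comp, hεe, he])
  obtain ⟨Y, i, p, hip, hpi⟩ := IsIdempotentComplete.idempotents_split (E.X 0) ε hε2
  haveI : IsSplitMono (T.S.map i) :=
    IsSplitMono.mk' ⟨T.S.map p, by rw [← T.S.map_comp, hip, T.S.map_id]⟩
  have h2 : E.conn ≫ T.S.map p = 0 := by
    rw [← cancel_mono (T.S.map i), zero_comp, Category.assoc, ← T.S.map_comp, hpi, hεe]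
    exact h0
  obtain ⟨ψ, hψ⟩ := (T.exact_contra_bot E hE Y p).mp h2
  have h3 : IsIso (𝟙 (E.X 0) - E.mor 0 ≫ (ψ ≫ i)) := hcrad (ψ ≫ i)
  have h4 : E.mor 0 ≫ (ψ ≫ i) = ε := by rw [← Category.assoc, hψ, hpi]
  rw [h4] at h3
  have h5 : (𝟙 (E.X 0) - ε) ≫ (𝟙 (E.X 0) - ε) = 𝟙 (E.X 0) - ε := by
    rw [Preadditive.sub_comp, Preadditive.comp_sub, Preadditive.comp_sub, hε2]
    simp only [Category.id_comp, Category.comp_id]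
    abel
  haveI := h3
  have h6 : 𝟙 (E.X 0) - ε = 𝟙 (E.X 0) :=
    (cancel_epi (𝟙 (E.X 0) - ε)).mp (by rw [h5, Category.comp_id])
  have h7 : ε = 0 := sub_eq_self.mp h6
  rw [← hεe, h7, aux_smap_zero]

/-- (c) implies (b): if `ξ⁰` is in the radical then `ξᵈ⁺¹` is left minimal. -/
private lemma aux_c_to_b (k : Type*) [Field k] [Linear k C]
    (homfin : ∀ X Y : C, FiniteDimensional k (X ⟶ Y)) [IsIdempotentComplete C]
    (hE : T.isAngle E) (hras : RightAlmostSplit (fun _ => True) (E.mor d))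
    (hcrad : InRad (E.mor 0)) : LeftMinimal E.conn := by
  intro ν hν
  haveI := aux_equiv T
  have hconn0 : E.conn ≠ 0 := aux_conn_ne_zero T hE hras
  haveI : FiniteDimensional k (End (T.S.obj (E.X 0))) := homfin _ _
  set N : End (T.S.obj (E.X 0)) := ν with hNdef
  -- evaluation of polynomials in `N` against `conn`
  have hpow : ∀ n : ℕ,
      E.conn ≫ ((N ^ n : End (T.S.obj (E.X 0))) :
        T.S.obj (E.X 0) ⟶ T.S.obj (E.X 0)) = E.conn := by
    intro n
    induction n with
    | zero =>
        rw [pow_zero]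
        exact Category.comp_id _
    | succ n ih =>
        rw [pow_succ, End.mul_def, ← Category.assoc, hν, ih]
  have heval : ∀ f : Polynomial k,
      E.conn ≫ ((Polynomial.aeval N f : End (T.S.obj (E.X 0))) :
        T.S.obj (E.X 0) ⟶ T.S.obj (E.X 0)) = Polynomial.eval 1 f • E.conn := by
    intro f
    induction f using Polynomial.induction_on' with
    | add p q hp hq =>
        rw [map_add, Polynomial.eval_add, add_smul, ← hp, ← hq]
        exact Preadditive.comp_add _ _ _ _ _ _
    | monomial n a =>
        have h1 : ((Polynomial.aeval N (Polynomial.monomial n a) :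
              End (T.S.obj (E.X 0))) : T.S.obj (E.X 0) ⟶ T.S.obj (E.X 0))
            = a • ((N ^ n : End (T.S.obj (E.X 0))) :
              T.S.obj (E.X 0) ⟶ T.S.obj (E.X 0)) := by
          show (Polynomial.aeval N (Polynomial.monomial n a) :
            End (T.S.obj (E.X 0))) = a • N ^ n
          rw [Polynomial.aeval_monomial, Algebra.algebraMap_eq_smul_one,
            smul_mul_assoc, one_mul]
        rw [h1, Polynomial.eval_monomial, one_pow, mul_one, Linear.comp_smul, hpow n]
  obtain ⟨P, hPmonic, hPeval'⟩ := IsIntegral.of_finite k N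
  have hPeval : Polynomial.aeval N P = 0 := by rw [Polynomial.aeval_def]; exact hPeval' 
  obtain ⟨Q, hPQ, hndvd⟩ :=
    P.exists_eq_pow_rootMultiplicity_mul_and_not_dvd hPmonic.ne_zero 0
  rw [Polynomial.C_0, sub_zero] at hPQ hndvd
  generalize hmdef : Polynomial.rootMultiplicity 0 P = m at hPQ
  have hc0 : Q.coeff 0 ≠ 0 := fun h => hndvd (Polynomial.X_dvd_iff.mpr h)
  set c : k := Q.coeff 0 with hcdef
  set W : Polynomial k := Polynomial.X * ((-(c⁻¹)) • Q.divX) with hWdef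
  have h1W : (1 : Polynomial k) - W = c⁻¹ • Q := by
    conv_rhs => rw [← Polynomial.X_mul_divX_add Q]
    rw [hWdef, smul_add, mul_smul_comm, neg_smul, sub_neg_eq_add,
      Polynomial.smul_C, smul_eq_mul, inv_mul_cancel₀ hc0, Polynomial.C_1]
    abel
  have hkey0 : Polynomial.aeval N (Polynomial.X ^ m * (1 - W)) = 0 := by
    rw [h1W, mul_smul_comm, ← hPQ, map_smul, hPeval, smul_zero]
  have hstep : ∀ H : Polynomial k,
      Polynomial.aeval N (Polynomial.X ^ m * H)
        = Polynomial.aeval N (Polynomial.X ^ m * (W * H)) := by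
    intro H
    have hid : Polynomial.X ^ m * H - Polynomial.X ^ m * (W * H)
        = Polynomial.X ^ m * (1 - W) * H := by ring
    have h3 : Polynomial.aeval N (Polynomial.X ^ m * (1 - W) * H) = 0 := by
      rw [map_mul, hkey0, zero_mul]
    have h2 := congrArg (Polynomial.aeval N) hid
    rw [map_sub, h3] at h2
    exact sub_eq_zero.mp h2
  have hiter : ∀ (j : ℕ) (H : Polynomial k),
      Polynomial.aeval N (Polynomial.X ^ m * H)
        = Polynomial.aeval N (Polynomial.X ^ m * (W ^ j * H)) := by
    intro j
    induction j with
    | zero => intro H; rw [pow_zero, one_mul]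
    | succ j ih =>
        intro H
        have hpp : W ^ (j + 1) * H = W ^ j * (W * H) := by ring
        rw [hpp, ← ih (W * H), ← hstep H]
  rcases Nat.eq_zero_or_pos m with hm0 | hmpos
  · -- m = 0 : ν is invertible outright
    rw [hm0, pow_zero, one_mul, map_sub, map_one, sub_eq_zero] at hkey0
    have hWval : Polynomial.aeval N W = 1 := hkey0.symm
    have hNy : N * Polynomial.aeval N ((-(c⁻¹)) • Q.divX) = 1 := by
      have h9 : Polynomial.aeval N (Polynomial.X * ((-(c⁻¹)) • Q.divX)) = 1 := by
        rw [← hWdef, hWval]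
      rw [map_mul, Polynomial.aeval_X] at h9
      exact h9
    have hyN : Polynomial.aeval N ((-(c⁻¹)) • Q.divX) * N = 1 := by
      have h9 : Polynomial.aeval N (((-(c⁻¹)) • Q.divX) * Polynomial.X) = 1 := by
        rw [mul_comm, ← hWdef, hWval]
      rw [map_mul, Polynomial.aeval_X] at h9
      exact h9
    exact (isUnit_iff_isIso N).mp ⟨⟨N, _, hNy, hyN⟩, rfl⟩
  · set G : Polynomial k := (-(c⁻¹)) • Q.divX with hGdef
    have hWG : W = Polynomial.X * G := hWdef
    set e : End (T.S.obj (E.X 0)) :=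
      Polynomial.aeval N (Polynomial.X ^ m * G ^ m) with hedef
    have hee : e * e = e := by
      rw [hedef, ← map_mul]
      have h3 : Polynomial.X ^ m * G ^ m * (Polynomial.X ^ m * G ^ m)
          = Polynomial.X ^ m * (W ^ m * G ^ m) := by rw [hWG]; ring
      rw [h3, ← hiter m (G ^ m)]
    have hee' : (e : T.S.obj (E.X 0) ⟶ T.S.obj (E.X 0)) ≫ e = e := hee
    set t : k := Polynomial.eval 1 (Polynomial.X ^ m * G ^ m) with htdef
    have hconn_e : E.conn ≫ (e : T.S.obj (E.X 0) ⟶ T.S.obj (E.X 0)) = t • E.conn :=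
      heval _
    have ht2 : t * t = t := by
      have h5 : (t * t) • E.conn = t • E.conn := by
        calc (t * t) • E.conn = t • (t • E.conn) := by rw [mul_smul]
          _ = t • (E.conn ≫ e) := by rw [hconn_e]
          _ = (t • E.conn) ≫ e := (Linear.smul_comp _ _ _ _ _ _).symm
          _ = (E.conn ≫ e) ≫ e := by rw [hconn_e]
          _ = E.conn ≫ e := by rw [Category.assoc, hee']
          _ = t • E.conn := hconn_e
      by_contra hne
      refine hconn0 ?_
      have h6 : (t * t - t) • E.conn = 0 := by rw [sub_smul, h5, sub_self]
      rcases smul_eq_zero.mp h6 with h | h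
      · exact absurd (sub_eq_zero.mp h) hne
      · exact h
    have htcases : t = 0 ∨ t = 1 := by
      have h7 : t * (t - 1) = 0 := by rw [mul_sub, mul_one, ht2, sub_self]
      rcases mul_eq_zero.mp h7 with h | h
      · exact Or.inl h
      · exact Or.inr (sub_eq_zero.mp h)
    rcases htcases with ht0 | ht1
    · exfalso
      have h6 : E.conn ≫ (e : T.S.obj (E.X 0) ⟶ T.S.obj (E.X 0)) = 0 := by
        rw [hconn_e, ht0, zero_smul]
      have h7 : (e : T.S.obj (E.X 0) ⟶ T.S.obj (E.X 0)) = (0 : End (T.S.obj (E.X 0))) :=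
        aux_idem T hE hcrad e hee' h6
      have h8 : (N ^ m : End (T.S.obj (E.X 0))) = 0 := by
        calc (N ^ m : End (T.S.obj (E.X 0)))
            = Polynomial.aeval N (Polynomial.X ^ m * 1) := by
              rw [mul_one, map_pow, Polynomial.aeval_X]
          _ = Polynomial.aeval N (Polynomial.X ^ m * (W ^ m * 1)) := hiter m 1
          _ = Polynomial.aeval N (Polynomial.X ^ m)
              * Polynomial.aeval N (Polynomial.X ^ m * G ^ m) := by
              rw [mul_one]
              rw [show W ^ m = Polynomial.X ^ m * G ^ m by rw [hWG]; ring]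
              rw [show Polynomial.X ^ m * (Polynomial.X ^ m * G ^ m)
                  = Polynomial.X ^ m * (Polynomial.X ^ m * G ^ m) from rfl, map_mul]
          _ = 0 := by rw [← hedef, h7, mul_zero]
      have h12 := hpow m
      rw [h8] at h12
      apply hconn0
      rw [← h12]
      exact comp_zero
    · set e' : T.S.obj (E.X 0) ⟶ T.S.obj (E.X 0) := e with he'def
      have h6 : E.conn ≫ (𝟙 (T.S.obj (E.X 0)) - e') = 0 := by
        rw [Preadditive.comp_sub, Category.comp_id, hconn_e, ht1, one_smul, sub_self]
      have hid : (𝟙 (T.S.obj (E.X 0)) - e') ≫ (𝟙 (T.S.obj (E.X 0)) - e')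
          = 𝟙 (T.S.obj (E.X 0)) - e' := by
        rw [Preadditive.sub_comp, Preadditive.comp_sub, Preadditive.comp_sub, hee']
        simp only [Category.id_comp, Category.comp_id]
        abel
      have h7 : 𝟙 (T.S.obj (E.X 0)) - e' = 0 :=
        aux_idem T hE hcrad _ hid h6
      have h8 : e' = (1 : End (T.S.obj (E.X 0))) := (sub_eq_zero.mp h7).symm
      have hm1 : m - 1 + 1 = m := Nat.succ_pred_eq_of_pos hmpos
      have hXm : (Polynomial.X : Polynomial k) ^ m
          = Polynomial.X ^ (m - 1) * Polynomial.X := by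
        conv_lhs => rw [← hm1]
        rw [pow_succ]
      set y : End (T.S.obj (E.X 0)) :=
        Polynomial.aeval N (Polynomial.X ^ (m - 1) * G ^ m) with hydef
      have hNy : N * y = 1 := by
        have h9 : Polynomial.aeval N
            (Polynomial.X * (Polynomial.X ^ (m - 1) * G ^ m)) = 1 := by
          rw [show Polynomial.X * (Polynomial.X ^ (m - 1) * G ^ m)
              = (Polynomial.X ^ (m - 1) * Polynomial.X) * G ^ m by ring, ← hXm,
            ← hedef, h8]
        rw [map_mul, Polynomial.aeval_X] at h9
        exact h9
      have hyN : y * N = 1 := by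
        have h9 : Polynomial.aeval N
            ((Polynomial.X ^ (m - 1) * G ^ m) * Polynomial.X) = 1 := by
          rw [show (Polynomial.X ^ (m - 1) * G ^ m) * Polynomial.X
              = (Polynomial.X ^ (m - 1) * Polynomial.X) * G ^ m by ring, ← hXm,
            ← hedef, h8]
        rw [map_mul, Polynomial.aeval_X] at h9
        exact h9
      exact (isUnit_iff_isIso N).mp ⟨⟨N, y, hNy, hyN⟩, rfl⟩

end AuxProofs

/-- Let `ε : X⁰ → X¹ → ⋯ → Xᵈ →^{ξᵈ} Xᵈ⁺¹ →^{ξᵈ⁺¹} Σᵈ X⁰` be a `(d+2)`-angle in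
a Hom-finite Krull–Schmidt `k`-linear `(d+2)`-angulated category such that `ξᵈ`
is right almost split and (for `d ≥ 2`) `ξ¹, …, ξ^{d-1}` lie in the radical.
Then the following are equivalent: (a) `End(X⁰)` is local; (b) `ξᵈ⁺¹` is left
minimal; (c) `ξ⁰` lies in the radical; (d) `ε` is an Auslander–Reiten
`(d+2)`-angle. -/
theorem stmt_10 {C : Type u} [Category.{v} C] [Preadditive C]
    (k : Type*) [Field k] [Linear k C]
    (homfin : ∀ X Y : C, FiniteDimensional k (X ⟶ Y))
    [IsIdempotentComplete C]
    {d : ℕ} (hd : 1 ≤ d)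
    (T : DAngulated C d) (E : DAngle C d T.S) (hE : T.isAngle E)
    (hras : RightAlmostSplit (fun _ => True) (E.mor d))
    (hrad : ∀ i, 1 ≤ i → i ≤ d - 1 → InRad (E.mor i)) :
    (IsLocalRing (End (E.X 0)) ↔ LeftMinimal E.conn) ∧
    (LeftMinimal E.conn ↔ InRad (E.mor 0)) ∧
    (InRad (E.mor 0) ↔ IsARAngle T E) := by
  have hnsm : ¬ IsSplitMono (E.mor 0) := aux_mor0_nsm T hE hras
  have hab : IsLocalRing (End (E.X 0)) → LeftMinimal E.conn := fun ha =>
    aux_c_to_b T k homfin hE hras (aux_a_to_c T hE hras ha)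
  have hba : LeftMinimal E.conn → IsLocalRing (End (E.X 0)) := fun hb =>
    aux_factor_to_a T k homfin hE hras (fun g hg => aux_key T hE hras hb g hg)
  have hcb : InRad (E.mor 0) → LeftMinimal E.conn := fun hc =>
    aux_c_to_b T k homfin hE hras hc
  have hbc : LeftMinimal E.conn → InRad (E.mor 0) := fun hb =>
    aux_a_to_c T hE hras (hba hb)
  have hcd : InRad (E.mor 0) → IsARAngle T E := fun hc =>
    ⟨hE, ⟨hnsm, fun Z _ g hg => aux_key T hE hras (hcb hc) g hg⟩, hras, hrad⟩
  have hdc : IsARAngle T E → InRad (E.mor 0) := fun hd' =>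
    aux_a_to_c T hE hras
      (aux_factor_to_a T k homfin hE hras
        (fun g hg => hd'.2.1.2 (E.X 0) trivial g hg))
  exact ⟨⟨fun ha => hab ha, hba⟩, ⟨hbc, hcb⟩, ⟨hcd, hdc⟩⟩
end

section
/- Let $\mathcal{W}$ be an additive subcategory of a Hom-finite Krull-Schmidt $k$-linear $(d+2)$-angulated category $\mathcal{M}$, closed under $d$-extensions. Let $W^0\xrightarrow{\omega^0} W^1\to\cdots\to W^d\xrightarrow{\omega^d} W^{d+1}\xrightarrow{\omega^{d+1}}\Sigma^d W^0$ be a $(d+2)$-angle with all $W^i\in\mathcal{W}$. If $\omega^d$ is right almost split in $\mathcal{W}$ and $\omega^{d+1}$ is left minimal, then $\omega^0$ is left almost split in $\mathcal{W}$. -/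
open CategoryTheory CategoryTheory.Limits

universe v u

variable {C : Type u} [Category.{v} C] [Preadditive C]

private lemma splitMono_of_map_aux {C : Type u} [Category.{v} C] {S Sinv : C ⥤ C}
    (eta : S ⋙ Sinv ≅ 𝟭 C) {X Y : C} (g : X ⟶ Y)
    (h : IsSplitMono (S.map g)) : IsSplitMono g := by
  obtain ⟨⟨r, hr⟩⟩ := h
  refine ⟨⟨⟨eta.inv.app Y ≫ Sinv.map r ≫ eta.hom.app X, ?_⟩⟩⟩
  have nat : eta.inv.app X ≫ Sinv.map (S.map g) = g ≫ eta.inv.app Y := by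
    simpa using (eta.inv.naturality g).symm
  calc g ≫ eta.inv.app Y ≫ Sinv.map r ≫ eta.hom.app X
      = (g ≫ eta.inv.app Y) ≫ Sinv.map r ≫ eta.hom.app X := by simp
    _ = eta.inv.app X ≫ Sinv.map (S.map g) ≫ Sinv.map r ≫ eta.hom.app X := by
        rw [← Category.assoc, ← nat]; simp
    _ = eta.inv.app X ≫ Sinv.map (S.map g ≫ r) ≫ eta.hom.app X := by
        rw [Sinv.map_comp]; simp
    _ = 𝟙 X := by rw [hr]; simp

/-- Let `W` be an additive subcategory, closed under `d`-extensions, of a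
Hom-finite Krull–Schmidt `k`-linear `(d+2)`-angulated category, and let
`W⁰ →^{ω⁰} W¹ → ⋯ → Wᵈ →^{ωᵈ} Wᵈ⁺¹ →^{ωᵈ⁺¹} Σᵈ W⁰` be a `(d+2)`-angle with all
terms in `W`. If `ωᵈ` is right almost split in `W` and `ωᵈ⁺¹` is left minimal,
then `ω⁰` is left almost split in `W`. -/
theorem stmt_11 {C : Type u} [Category.{v} C] [Preadditive C] [HasZeroObject C]
    [HasBinaryBiproducts C]
    (k : Type*) [Field k] [Linear k C]
    (homfin : ∀ X Y : C, FiniteDimensional k (X ⟶ Y))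
    [IsIdempotentComplete C]
    {d : ℕ} (hd : 1 ≤ d)
    (T : DAngulated C d) (W : C → Prop)
    (hWadd : IsAdditiveSubcat W) (hWext : ClosedUnderDExtensions T W)
    (E : DAngle C d T.S) (hE : T.isAngle E)
    (hterms : ∀ i, i ≤ d + 1 → W (E.X i))
    (hras : RightAlmostSplit W (E.mor d))
    (hlmin : LeftMinimal E.conn) :
    LeftAlmostSplit W (E.mor 0) := by
  -- consecutive compositions vanish
  have SmorD : E.mor d ≫ E.conn = 0 :=
    (T.exact_cov_top E hE _ (E.mor d)).mpr ⟨𝟙 _, Category.id_comp _⟩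
  constructor
  · -- ω⁰ is not a split mono
    intro hsm
    have h1 : E.conn ≫ T.S.map (𝟙 (E.X 0)) = 0 :=
      (T.exact_contra_bot E hE _ (𝟙 _)).mpr ⟨retraction (E.mor 0), by simp⟩
    have hconn0 : E.conn = 0 := by simpa using h1
    obtain ⟨h, hh⟩ := (T.exact_cov_top E hE _ (𝟙 _)).mp (by simp [hconn0])
    exact hras.1 ⟨⟨⟨h, hh⟩⟩⟩
  · intro Z hZ g hg
    obtain ⟨F, hF, hmid, h0, h1, hconn⟩ :=
      hWext Z (E.X (d + 1)) hZ (hterms (d + 1) le_rfl) (E.conn ≫ T.S.map g)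
    subst h0
    simp only [eqToHom_refl, Category.comp_id] at hconn
    have FmorD : F.mor d ≫ F.conn = 0 :=
      (T.exact_cov_top F hF _ (F.mor d)).mpr ⟨𝟙 _, Category.id_comp _⟩
    by_cases hse : IsSplitEpi (F.mor d ≫ eqToHom h1)
    · -- then F.conn = 0, hence δ = 0, hence g factors through ω⁰
      obtain ⟨⟨s, hs⟩⟩ := hse
      have hsplit : (eqToHom h1 ≫ s) ≫ F.mor d = 𝟙 (F.X (d + 1)) := by
        have : s ≫ F.mor d = eqToHom h1.symm := by
          rw [← cancel_mono (eqToHom h1)]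
          simpa using hs
        rw [Category.assoc, this]
        simp
      have hF0 : F.conn = 0 := by
        have := (T.exact_cov_top F hF _ (𝟙 (F.X (d + 1)))).mpr ⟨eqToHom h1 ≫ s, hsplit⟩
        simpa using this
      have hδ : E.conn ≫ T.S.map g = 0 := by
        rw [hF0] at hconn
        rw [← cancel_epi (eqToHom h1)]
        simp [← hconn]
      obtain ⟨ψ, hψ⟩ := (T.exact_contra_bot E hE _ g).mp hδ
      exact ⟨ψ, hψ⟩
    · -- F.mor d factors through ωᵈ; derive a contradiction with `g` not split mono
      exfalso
      obtain ⟨φ, hφ⟩ := hras.2 (F.X d) (hmid d hd le_rfl) (F.mor d ≫ eqToHom h1) hse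
      have hz : F.mor d ≫ (eqToHom h1 ≫ E.conn) = 0 := by
        rw [← Category.assoc, ← hφ, Category.assoc, SmorD, Limits.comp_zero]
      obtain ⟨ψ, hψ⟩ := (T.exact_contra_top F hF _ (eqToHom h1 ≫ E.conn)).mp hz
      rw [hconn] at hψ
      have hmin : E.conn ≫ (T.S.map g ≫ ψ) = E.conn := by
        rw [← cancel_epi (eqToHom h1)]
        simpa using hψ
      have hiso : IsIso (T.S.map g ≫ ψ) := hlmin _ hmin
      have hsmS : IsSplitMono (T.S.map g) :=
        ⟨⟨⟨ψ ≫ inv (T.S.map g ≫ ψ), by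
          rw [← Category.assoc, IsIso.hom_inv_id]⟩⟩⟩
      exact hg (splitMono_of_map_aux T.SSinv g hsmS)
end

section
/- Let $\mathcal{W}$ be an additive subcategory of a Hom-finite Krull-Schmidt $k$-linear $(d+2)$-angulated category $\mathcal{M}$, closed under $d$-extensions, and let $\epsilon: W^0\to\cdots\to W^{d+1}\to\Sigma^d W^0$ be a $(d+2)$-angle with all terms in $\mathcal{W}$. Then the following are equivalent: (a) $\epsilon$ is an Auslander-Reiten $(d+2)$-angle in $\mathcal{W}$; (b) $\omega^0,\dots,\omega^{d-1}$ lie in the radical and $\omega^d$ is right almost split in $\mathcal{W}$; (c) $\omega^1,\dots,\omega^d$ lie in the radical and $\omega^0$ is left almost split in $\mathcal{W}$. -/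
open CategoryTheory CategoryTheory.Limits

universe v u

variable {C : Type u} [Category.{v} C] [Preadditive C]

open ZeroObject

section AuxLemmas

variable [HasZeroObject C] [HasBinaryBiproducts C]

/-- If `𝟙 X - f ≫ g` is invertible then so is `𝟙 Y - g ≫ f`. -/
lemma aux_swap_isIso {X Y : C} (f : X ⟶ Y) (g : Y ⟶ X)
    (h : IsIso (𝟙 X - f ≫ g)) : IsIso (𝟙 Y - g ≫ f) := by
  set w := inv (𝟙 X - f ≫ g) with hwdef
  have hw1 : w - f ≫ g ≫ w = 𝟙 X := by
    have h1 := IsIso.hom_inv_id (𝟙 X - f ≫ g)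
    rw [← hwdef] at h1
    simpa [Preadditive.sub_comp, Category.assoc] using h1
  have hw2 : w - w ≫ f ≫ g = 𝟙 X := by
    have h2 := IsIso.inv_hom_id (𝟙 X - f ≫ g)
    rw [← hwdef] at h2
    simpa [Preadditive.comp_sub] using h2
  have hfg : f ≫ g ≫ w = w - 𝟙 X := by rw [← hw1]; abel
  have hwfg : w ≫ f ≫ g = w - 𝟙 X := by rw [← hw2]; abel
  refine ⟨⟨𝟙 Y + g ≫ w ≫ f, ?_, ?_⟩⟩
  · have exp : (𝟙 Y - g ≫ f) ≫ (𝟙 Y + g ≫ w ≫ f)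
        = 𝟙 Y + g ≫ w ≫ f - g ≫ f - g ≫ (f ≫ g ≫ w) ≫ f := by
      simp only [Preadditive.sub_comp, Preadditive.comp_add, Preadditive.add_comp,
        Category.id_comp, Category.comp_id, Category.assoc]
      abel
    rw [exp, hfg]
    simp only [Preadditive.sub_comp, Preadditive.comp_sub, Category.id_comp]
    abel
  · have exp : (𝟙 Y + g ≫ w ≫ f) ≫ (𝟙 Y - g ≫ f)
        = 𝟙 Y + g ≫ w ≫ f - g ≫ f - g ≫ (w ≫ f ≫ g) ≫ f := by
      simp only [Preadditive.sub_comp, Preadditive.comp_add, Preadditive.add_comp,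
        Preadditive.comp_sub, Category.id_comp, Category.comp_id, Category.assoc]
      abel
    rw [exp, hwfg]
    simp only [Preadditive.sub_comp, Preadditive.comp_sub, Category.id_comp]
    abel

/-- In a Hom-finite category, an endomorphism with a left inverse is invertible. -/
lemma aux_isIso_of_comp_self (k : Type*) [Field k] [Linear k C]
    (homfin : ∀ X Y : C, FiniteDimensional k (X ⟶ Y))
    {Y : C} {u s : Y ⟶ Y} (h : s ≫ u = 𝟙 Y) : IsIso u := by
  haveI := homfin Y Y
  have hsurj : Function.Surjective (Linear.rightComp k Y u) := by
    intro φ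
    exact ⟨φ ≫ s, by simp [Linear.rightComp_apply, Category.assoc, h]⟩
  have hinj := (LinearMap.injective_iff_surjective).mpr hsurj
  have hus : u ≫ s = 𝟙 Y := by
    apply hinj
    simp only [Linear.rightComp_apply, Category.assoc, h, Category.comp_id, Category.id_comp]
  exact ⟨⟨s, hus, h⟩⟩

/-- In a Hom-finite category, an endomorphism with a right inverse is invertible. -/
lemma aux_isIso_of_self_comp (k : Type*) [Field k] [Linear k C]
    (homfin : ∀ X Y : C, FiniteDimensional k (X ⟶ Y))
    {Y : C} {u s : Y ⟶ Y} (h : u ≫ s = 𝟙 Y) : IsIso u := by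
  haveI := homfin Y Y
  have hinj : Function.Injective (Linear.rightComp k Y u) := by
    intro a b hab
    have hab' : a ≫ u = b ≫ u := by
      simpa only [Linear.rightComp_apply] using hab
    calc a = a ≫ u ≫ s := by rw [h, Category.comp_id]
    _ = b ≫ u ≫ s := by rw [← Category.assoc, hab', Category.assoc]
    _ = b := by rw [h, Category.comp_id]
  obtain ⟨t, ht⟩ := (LinearMap.injective_iff_surjective).mp hinj (𝟙 Y)
  have ht' : t ≫ u = 𝟙 Y := by simpa only [Linear.rightComp_apply] using ht
  have hts : t = s := by
    calc t = t ≫ u ≫ s := by rw [h, Category.comp_id]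
    _ = s := by rw [← Category.assoc, ht', Category.id_comp]
  exact ⟨⟨s, h, hts ▸ ht'⟩⟩

end AuxLemmas

/-- Let `W` be an additive subcategory, closed under `d`-extensions, of a
Hom-finite Krull–Schmidt `k`-linear `(d+2)`-angulated category, and let
`ε : W⁰ →^{ω⁰} ⋯ →^{ωᵈ} Wᵈ⁺¹ → Σᵈ W⁰` be a `(d+2)`-angle with all terms in `W`.
The following are equivalent: (a) `ε` is an Auslander–Reiten `(d+2)`-angle in
`W`; (b) `ω⁰, …, ω^{d-1}` lie in the radical and `ωᵈ` is right almost split in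
`W`; (c) `ω¹, …, ωᵈ` lie in the radical and `ω⁰` is left almost split in `W`. -/
theorem stmt_12 {C : Type u} [Category.{v} C] [Preadditive C] [HasZeroObject C]
    [HasBinaryBiproducts C]
    (k : Type*) [Field k] [Linear k C]
    (homfin : ∀ X Y : C, FiniteDimensional k (X ⟶ Y))
    [IsIdempotentComplete C]
    {d : ℕ} (hd : 1 ≤ d)
    (T : DAngulated C d) (W : C → Prop)
    (hWadd : IsAdditiveSubcat W) (hWext : ClosedUnderDExtensions T W)
    (E : DAngle C d T.S) (hE : T.isAngle E)
    (hterms : ∀ i, i ≤ d + 1 → W (E.X i)) :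
    (IsARAngleIn T W E ↔
      ((∀ i, i ≤ d - 1 → InRad (E.mor i)) ∧ RightAlmostSplit W (E.mor d))) ∧
    (IsARAngleIn T W E ↔
      ((∀ i, 1 ≤ i → i ≤ d → InRad (E.mor i)) ∧ LeftAlmostSplit W (E.mor 0))) := by
  classical
  -- basic vanishing of consecutive composites
  have hmd_conn : E.mor d ≫ E.conn = 0 :=
    (T.exact_cov_top E hE (E.X d) (E.mor d)).mpr ⟨𝟙 _, Category.id_comp _⟩
  have hconn_m0 : E.conn ≫ T.S.map (E.mor 0) = 0 :=
    (T.exact_contra_bot E hE (E.X 1) (E.mor 0)).mpr ⟨𝟙 _, Category.comp_id _⟩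
  -- `S` is fully faithful and additive
  let Eqv : C ≌ C := CategoryTheory.Equivalence.mk T.S T.Sinv T.SSinv.symm T.SinvS
  haveI : T.S.Full := Eqv.full_functor
  haveI : T.S.Faithful := Eqv.faithful_functor
  let Eqv' : C ≌ C := CategoryTheory.Equivalence.mk T.Sinv T.S T.SinvS.symm T.SSinv
  haveI : T.Sinv.Full := Eqv'.full_functor
  haveI : T.Sinv.EssSurj := Eqv'.essSurj_functor
  haveI : T.S.IsEquivalence := Eqv.isEquivalence_functor
  have hz : Limits.IsZero (T.S.obj (0 : C)) := by
    rw [Limits.IsZero.iff_id_eq_zero]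
    have hsub : Subsingleton (T.S.obj (0 : C) ⟶ T.S.obj (0 : C)) := by
      constructor
      intro a b
      obtain ⟨ta, rfl⟩ := T.S.map_surjective a
      obtain ⟨tb, rfl⟩ := T.S.map_surjective b
      congr 1
      exact (Limits.isZero_zero C).eq_of_src ta tb
    exact Subsingleton.elim _ _
  haveI : T.S.PreservesZeroMorphisms :=
    Functor.preservesZeroMorphisms_of_map_zero_object hz.isoZero
  haveI : T.S.Additive := Functor.additive_of_preserves_binary_products T.S
  -- if `E.mor d` is not split epi, then `E.mor 0` is not split mono
  have nsm_of_nse : ¬ IsSplitEpi (E.mor d) → ¬ IsSplitMono (E.mor 0) := by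
    intro hnse hsm
    obtain ⟨⟨⟨r, hr⟩⟩⟩ := hsm
    have hc0 : E.conn = 0 := by
      have h' := (T.exact_contra_bot E hE (E.X 0) (𝟙 (E.X 0))).mpr ⟨r, hr⟩
      simpa using h'
    obtain ⟨h, hh⟩ := (T.exact_cov_top E hE (E.X (d + 1)) (𝟙 _)).mp (by rw [hc0]; simp)
    exact hnse (IsSplitEpi.mk' ⟨h, hh⟩)
  -- if `E.mor 0` is not split mono, then `E.mor d` is not split epi
  have nse_of_nsm : ¬ IsSplitMono (E.mor 0) → ¬ IsSplitEpi (E.mor d) := by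
    intro hnsm hse
    obtain ⟨⟨⟨s, hs⟩⟩⟩ := hse
    have hc0 : E.conn = 0 := by
      calc E.conn = (s ≫ E.mor d) ≫ E.conn := by rw [hs, Category.id_comp]
      _ = s ≫ E.mor d ≫ E.conn := by rw [Category.assoc]
      _ = 0 := by rw [hmd_conn, Limits.comp_zero]
    obtain ⟨ψ, hψ⟩ := (T.exact_contra_bot E hE (E.X 0) (𝟙 _)).mp (by rw [hc0]; simp)
    exact hnsm (IsSplitMono.mk' ⟨ψ, hψ⟩)
  -- left almost split implies radical
  have rad0 : LeftAlmostSplit W (E.mor 0) → InRad (E.mor 0) := by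
    intro hlas u
    by_cases hsp : IsSplitMono (𝟙 (E.X 0) - E.mor 0 ≫ u)
    · obtain ⟨⟨⟨r, hr⟩⟩⟩ := hsp
      exact aux_isIso_of_self_comp k homfin hr
    · obtain ⟨h', hh'⟩ := hlas.2 (E.X 0) (hterms 0 (Nat.zero_le _)) _ hsp
      exact absurd (IsSplitMono.mk' ⟨u + h', by rw [Preadditive.comp_add, hh']; abel⟩) hlas.1
  -- right almost split implies radical
  have radd : RightAlmostSplit W (E.mor d) → InRad (E.mor d) := by
    intro hras u
    have key : IsIso (𝟙 (E.X (d + 1)) - u ≫ E.mor d) := by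
      by_cases hsp : IsSplitEpi (𝟙 (E.X (d + 1)) - u ≫ E.mor d)
      · obtain ⟨⟨⟨s, hs⟩⟩⟩ := hsp
        exact aux_isIso_of_comp_self k homfin hs
      · obtain ⟨h', hh'⟩ := hras.2 (E.X (d + 1)) (hterms (d + 1) le_rfl) _ hsp
        exact absurd (IsSplitEpi.mk' ⟨u + h', by rw [Preadditive.add_comp, hh']; abel⟩) hras.1
    exact aux_swap_isIso u (E.mor d) key
  -- key step (b) ⟹ left almost split
  have keyB : InRad (E.mor 0) → RightAlmostSplit W (E.mor d) →
      LeftAlmostSplit W (E.mor 0) := by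
    intro hrad0 hras
    refine ⟨nsm_of_nse hras.1, ?_⟩
    intro Z hZ g hg
    refine (T.exact_contra_bot E hE Z g).mp ?_
    obtain ⟨F, hF, hFmid, h0, h1, hFconn⟩ :=
      hWext Z (E.X (d + 1)) hZ (hterms (d + 1) le_rfl) (E.conn ≫ T.S.map g)
    by_cases hsp : IsSplitEpi (F.mor d)
    · obtain ⟨⟨⟨s, hs⟩⟩⟩ := hsp
      have hFmdc : F.mor d ≫ F.conn = 0 :=
        (T.exact_cov_top F hF (F.X d) (F.mor d)).mpr ⟨𝟙 _, Category.id_comp _⟩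
      have hFc0 : F.conn = 0 := by
        calc F.conn = (s ≫ F.mor d) ≫ F.conn := by rw [hs, Category.id_comp]
        _ = s ≫ F.mor d ≫ F.conn := by rw [Category.assoc]
        _ = 0 := by rw [hFmdc, Limits.comp_zero]
      rw [hFconn] at hFc0
      have h' := congrArg
        (fun t => eqToHom h1.symm ≫ t ≫ eqToHom (congrArg T.S.obj h0)) hFc0
      simpa [Category.assoc, eqToHom_trans, eqToHom_refl] using h'
    · exfalso
      have hθ' : ¬ IsSplitEpi (F.mor d ≫ eqToHom h1) := by
        intro hsp'
        obtain ⟨⟨⟨s', hs'⟩⟩⟩ := hsp'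
        refine hsp (IsSplitEpi.mk' ⟨eqToHom h1 ≫ s', ?_⟩)
        have hs'' : s' ≫ F.mor d = eqToHom h1.symm := by
          have h' := congrArg (fun t => t ≫ eqToHom h1.symm) hs'
          simpa [Category.assoc, eqToHom_trans, eqToHom_refl] using h'
        rw [Category.assoc, hs'', eqToHom_trans, eqToHom_refl]
      obtain ⟨ρ, hρ⟩ := hras.2 (F.X d) (hFmid d hd le_rfl) (F.mor d ≫ eqToHom h1) hθ'
      have hzero : F.mor d ≫ (eqToHom h1 ≫ E.conn) = 0 := by
        rw [← Category.assoc, ← hρ, Category.assoc, hmd_conn, Limits.comp_zero]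
      obtain ⟨v, hv⟩ :=
        (T.exact_contra_top F hF (T.S.obj (E.X 0)) (eqToHom h1 ≫ E.conn)).mp hzero
      rw [hFconn] at hv
      have hx : E.conn ≫ T.S.map g ≫ eqToHom (congrArg T.S.obj h0.symm) ≫ v = E.conn := by
        have h' := congrArg (fun t => eqToHom h1.symm ≫ t) hv
        simpa [Category.assoc, eqToHom_trans, eqToHom_refl] using h'
      obtain ⟨y, hy⟩ :=
        T.S.map_surjective (T.S.map g ≫ eqToHom (congrArg T.S.obj h0.symm) ≫ v)
      have h1y : E.conn ≫ T.S.map (𝟙 (E.X 0) - y) = 0 := by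
        rw [T.S.map_sub, T.S.map_id, Preadditive.comp_sub, Category.comp_id, hy, hx,
          sub_self]
      obtain ⟨ψ, hψ⟩ := (T.exact_contra_bot E hE (E.X 0) (𝟙 (E.X 0) - y)).mp h1y
      have hyiso : IsIso y := by
        have hy2 : y = 𝟙 (E.X 0) - E.mor 0 ≫ ψ := by rw [hψ]; abel
        rw [hy2]
        exact hrad0 ψ
      obtain ⟨r₀, hr₀⟩ :=
        T.S.map_surjective (eqToHom (congrArg T.S.obj h0.symm) ≫ v ≫ T.S.map (inv y))
      refine hg (IsSplitMono.mk' ⟨r₀, T.S.map_injective ?_⟩)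
      rw [T.S.map_comp, hr₀, T.S.map_id]
      calc T.S.map g ≫ eqToHom (congrArg T.S.obj h0.symm) ≫ v ≫ T.S.map (inv y)
          = (T.S.map g ≫ eqToHom (congrArg T.S.obj h0.symm) ≫ v) ≫ T.S.map (inv y) := by
            simp only [Category.assoc]
      _ = T.S.map y ≫ T.S.map (inv y) := by rw [← hy]
      _ = 𝟙 _ := by rw [← T.S.map_comp, IsIso.hom_inv_id, T.S.map_id]
  -- key step (c) ⟹ right almost split
  have keyC : InRad (E.mor d) → LeftAlmostSplit W (E.mor 0) →
      RightAlmostSplit W (E.mor d) := by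
    intro hradd hlas
    refine ⟨nse_of_nsm hlas.1, ?_⟩
    intro Z hZ g hg
    refine (T.exact_cov_top E hE Z g).mp ?_
    obtain ⟨F, hF, hFmid, h0, h1, hFconn⟩ :=
      hWext (E.X 0) Z (hterms 0 (Nat.zero_le _)) hZ (g ≫ E.conn)
    by_cases hsp : IsSplitMono (F.mor 0)
    · obtain ⟨⟨⟨r, hr⟩⟩⟩ := hsp
      have hFc0 : F.conn = 0 := by
        have h' := (T.exact_contra_bot F hF (F.X 0) (𝟙 (F.X 0))).mpr ⟨r, hr⟩
        simpa using h'
      rw [hFconn] at hFc0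
      have h' := congrArg
        (fun t => eqToHom h1.symm ≫ t ≫ eqToHom (congrArg T.S.obj h0)) hFc0
      simpa [Category.assoc, eqToHom_trans, eqToHom_refl] using h'
    · exfalso
      have hμ' : ¬ IsSplitMono (eqToHom h0.symm ≫ F.mor 0) := by
        intro h'
        obtain ⟨⟨⟨r, hr⟩⟩⟩ := h'
        refine hsp (IsSplitMono.mk' ⟨r ≫ eqToHom h0.symm, ?_⟩)
        have hr' : F.mor 0 ≫ r = eqToHom h0 := by
          have h'' := congrArg (fun t => eqToHom h0 ≫ t) hr
          simpa [Category.assoc, eqToHom_trans, eqToHom_refl] using h''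
        rw [← Category.assoc, hr', eqToHom_trans, eqToHom_refl]
      obtain ⟨ρ, hρ⟩ := hlas.2 (F.X 1) (hFmid 1 le_rfl hd) (eqToHom h0.symm ≫ F.mor 0) hμ'
      have hzero : (E.conn ≫ T.S.map (eqToHom h0.symm)) ≫ T.S.map (F.mor 0) = 0 := by
        rw [Category.assoc, ← T.S.map_comp, ← hρ, T.S.map_comp, ← Category.assoc,
          hconn_m0, Limits.zero_comp]
      obtain ⟨h₂, hh₂⟩ :=
        (T.exact_cov_shift F hF (E.X (d + 1)) (E.conn ≫ T.S.map (eqToHom h0.symm))).mp hzero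
      rw [hFconn] at hh₂
      have hx : h₂ ≫ eqToHom h1 ≫ g ≫ E.conn = E.conn := by
        have h' := congrArg (fun t => t ≫ eqToHom (congrArg T.S.obj h0)) hh₂
        simpa [Category.assoc, eqToHom_trans, eqToHom_refl, eqToHom_map] using h'
      have h1x : (𝟙 (E.X (d + 1)) - h₂ ≫ eqToHom h1 ≫ g) ≫ E.conn = 0 := by
        rw [Preadditive.sub_comp, Category.id_comp]
        simp only [Category.assoc]
        rw [hx, sub_self]
      obtain ⟨h₃, hh₃⟩ :=
        (T.exact_cov_top E hE (E.X (d + 1)) (𝟙 _ - h₂ ≫ eqToHom h1 ≫ g)).mp h1x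
      have hxiso : IsIso (h₂ ≫ eqToHom h1 ≫ g) := by
        have hx2 : h₂ ≫ eqToHom h1 ≫ g = 𝟙 (E.X (d + 1)) - h₃ ≫ E.mor d := by
          rw [hh₃]; abel
        rw [hx2]
        exact aux_swap_isIso (E.mor d) h₃ (hradd h₃)
      refine hg (IsSplitEpi.mk' ⟨inv (h₂ ≫ eqToHom h1 ≫ g) ≫ h₂ ≫ eqToHom h1, ?_⟩)
      simp only [Category.assoc]
      exact IsIso.inv_hom_id _
  -- assemble the equivalences
  constructor
  · constructor
    · rintro ⟨-, -, hlas, hras, hmid⟩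
      refine ⟨?_, hras⟩
      intro i hi
      rcases Nat.eq_zero_or_pos i with h | h
      · subst h
        exact rad0 hlas
      · exact hmid i h hi
    · rintro ⟨hrad, hras⟩
      exact ⟨hE, hterms, keyB (hrad 0 (Nat.zero_le _)) hras, hras,
        fun i _ h2 => hrad i h2⟩
  · constructor
    · rintro ⟨-, -, hlas, hras, hmid⟩
      refine ⟨?_, hlas⟩
      intro i hi1 hi2
      rcases eq_or_lt_of_le hi2 with h | h
      · subst h
        exact radd hras
      · exact hmid i hi1 (by omega)
    · rintro ⟨hrad, hlas⟩
      exact ⟨hE, hterms, hlas, keyC (hrad d hd le_rfl) hlas,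
        fun i hi1 hi2 => hrad i hi1 (by omega)⟩
end

section
/- Let $\mathcal{M}$ be a skeletally small Hom-finite $k$-linear $(d+2)$-angulated category with split idempotents, $\mathcal{W}$ additive closed under $d$-extensions, $W\in\mathcal{W}$, and let $X^0\to\cdots\to X^d\to W\to\Sigma^d X^0$ be an Auslander-Reiten $(d+2)$-angle in $\mathcal{M}$. If $\nu: V\to X^0$ is a $\mathcal{W}$-cover, then $V$ is either zero or indecomposable. -/
open CategoryTheory CategoryTheory.Limits

universe v u

variable {C : Type u} [Category.{v} C] [Preadditive C]

section Auxiliary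

namespace DAngulated

variable {C : Type u} [Category.{v} C] [Preadditive C] {d : ℕ} (T : DAngulated C d)

/-- The suspension together with its inverse forms an equivalence of categories. -/
noncomputable def eqv : C ≌ C :=
  CategoryTheory.Equivalence.mk T.S T.Sinv T.SSinv.symm T.SinvS

lemma S_isEquivalence : T.S.IsEquivalence :=
  (T.eqv).isEquivalence_functor

lemma S_additive [HasZeroObject C] [HasBinaryBiproducts C] : T.S.Additive := by
  haveI : T.S.IsEquivalence := T.S_isEquivalence
  haveI := Limits.preservesBinaryBiproducts_of_preservesBinaryProducts T.S
  exact Functor.additive_of_preservesBinaryBiproducts T.S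

lemma S_map_eq_zero_iff [HasZeroObject C] [HasBinaryBiproducts C] {A B : C} (f : A ⟶ B) :
    T.S.map f = 0 ↔ f = 0 := by
  haveI : T.S.Additive := T.S_additive
  haveI : T.S.IsEquivalence := T.S_isEquivalence
  constructor
  · intro h
    exact T.S.map_injective (by rw [h, CategoryTheory.Functor.map_zero])
  · intro h
    rw [h, CategoryTheory.Functor.map_zero]

lemma conn_comp_map_mor0 (E : DAngle C d T.S) (hE : T.isAngle E) :
    E.conn ≫ T.S.map (E.mor 0) = 0 :=
  (T.exact_contra_bot E hE _ (E.mor 0)).mpr ⟨𝟙 _, Category.comp_id _⟩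

lemma conn_ne_zero (E : DAngle C d T.S) (hE : T.isAngle E)
    (h : ¬ IsSplitEpi (E.mor d)) : E.conn ≠ 0 := by
  intro h0
  obtain ⟨s, hs⟩ := (T.exact_cov_top E hE _ (𝟙 (E.X (d + 1)))).mp (by rw [h0, comp_zero])
  exact h ⟨⟨⟨s, hs⟩⟩⟩

lemma isSplitMono_map {A B : C} (f : A ⟶ B) [IsSplitMono f] : IsSplitMono (T.S.map f) :=
  IsSplitMono.mk' ⟨T.S.map (retraction f), by
    rw [← CategoryTheory.Functor.map_comp, IsSplitMono.id, CategoryTheory.Functor.map_id]⟩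

/-- The connecting morphism of an AR `(d+2)`-angle factors through `Σᵈ δ` for
every nonzero morphism `δ` into `X⁰`. -/
lemma star [HasZeroObject C] [HasBinaryBiproducts C]
    (E : DAngle C d T.S) (hE : T.isAngle E)
    (las : LeftAlmostSplit (fun _ => True) (E.mor 0))
    {B : C} (δ : B ⟶ E.X 0) (hδ : δ ≠ 0) :
    ∃ θ : E.X (d + 1) ⟶ T.S.obj B, θ ≫ T.S.map δ = E.conn := by
  obtain ⟨K, hK, h0, h1, hconn⟩ := T.extend (T.S.map δ)
  have hKz : K.conn ≫ T.S.map (K.mor 0) = 0 := T.conn_comp_map_mor0 K hK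
  rw [hconn] at hKz
  by_cases hsm : IsSplitMono (eqToHom h0.symm ≫ K.mor 0)
  · exfalso
    apply hδ
    haveI := hsm
    have h3 : δ ≫ eqToHom h0.symm ≫ K.mor 0 = 0 := by
      apply (T.S_map_eq_zero_iff _).mp
      rw [CategoryTheory.Functor.map_comp, CategoryTheory.Functor.map_comp, eqToHom_map, ← cancel_epi (eqToHom h1),
        comp_zero]
      simpa only [Category.assoc] using hKz
    exact (cancel_mono (eqToHom h0.symm ≫ K.mor 0)).mp (by rw [h3, zero_comp])
  · obtain ⟨h, hh⟩ := las.2 (K.X 1) trivial _ hsm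
    have hγ0 : E.conn ≫ T.S.map (E.mor 0) = 0 := T.conn_comp_map_mor0 E hE
    have key : (E.conn ≫ eqToHom (congrArg T.S.obj h0.symm)) ≫ T.S.map (K.mor 0) = 0 := by
      rw [Category.assoc, ← eqToHom_map T.S h0.symm, ← CategoryTheory.Functor.map_comp, ← hh,
        CategoryTheory.Functor.map_comp, ← Category.assoc, hγ0, zero_comp]
    obtain ⟨h', hh'⟩ := (T.exact_cov_shift K hK _ _).mp key
    refine ⟨h' ≫ eqToHom h1, ?_⟩
    rw [hconn] at hh'
    rw [← cancel_mono (eqToHom (congrArg T.S.obj h0.symm))]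
    simpa only [Category.assoc] using hh'

/-- Key consequence of minimality of a `W`-cover: any morphism from an object of
`W` to `Σᵈ V` which is killed by `Σᵈ ν` vanishes. -/
lemma lemQ [HasZeroObject C] [HasBinaryBiproducts C]
    (hd : 1 ≤ d) (W : C → Prop) (hWext : ClosedUnderDExtensions T W)
    {V X0 : C} (ν : V ⟶ X0) (hcov : IsWCover W ν)
    {Q : C} (hQ : W Q) (x : Q ⟶ T.S.obj V) (hx : x ≫ T.S.map ν = 0) : x = 0 := by
  obtain ⟨E', hE', hmid, h0, h1, hconn⟩ := hWext V Q hcov.1.1 hQ x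
  have hz : E'.conn ≫ T.S.map (eqToHom h0 ≫ ν) = 0 := by
    rw [hconn]
    simp only [CategoryTheory.Functor.map_comp, eqToHom_map, Category.assoc,
      eqToHom_trans_assoc, eqToHom_refl, Category.id_comp]
    rw [hx, comp_zero]
  obtain ⟨ψ, hψ⟩ := (T.exact_contra_bot E' hE' _ _).mp hz
  obtain ⟨s, hs⟩ := hcov.1.2 (E'.X 1) (hmid 1 le_rfl hd) ψ
  set σ : V ⟶ V := eqToHom h0.symm ≫ E'.mor 0 ≫ s with hσdef
  have hσ : σ ≫ ν = ν := by
    rw [hσdef]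
    simp only [Category.assoc, hs, hψ, eqToHom_trans_assoc, eqToHom_refl, Category.id_comp]
  haveI hiso : IsIso σ := hcov.2 _ hσ
  have ht : E'.mor 0 ≫ s = eqToHom h0 ≫ σ := by
    rw [hσdef]
    simp only [eqToHom_trans_assoc, eqToHom_refl, Category.id_comp]
  haveI hsm : IsSplitMono (E'.mor 0) := IsSplitMono.mk'
    ⟨s ≫ inv σ ≫ eqToHom h0.symm, by
      rw [← Category.assoc, ht]
      simp only [Category.assoc, IsIso.hom_inv_id_assoc, eqToHom_trans, eqToHom_refl]⟩
  haveI : IsSplitMono (T.S.map (E'.mor 0)) := T.isSplitMono_map (E'.mor 0)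
  have hc0 : E'.conn = 0 := by
    have hz2 : E'.conn ≫ T.S.map (E'.mor 0) = 0 := T.conn_comp_map_mor0 E' hE'
    exact (cancel_mono (T.S.map (E'.mor 0))).mp (by rw [hz2, zero_comp])
  have hcx : eqToHom h1 ≫ x ≫ eqToHom (congrArg T.S.obj h0.symm) = 0 := by
    rw [← hconn, hc0]
  rw [← cancel_epi (eqToHom h1), ← cancel_mono (eqToHom (congrArg T.S.obj h0.symm))]
  simpa only [Category.assoc, zero_comp, comp_zero] using hcx

end DAngulated

end Auxiliary

/-- Let `M` be a skeletally small Hom-finite `k`-linear `(d+2)`-angulated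
category with split idempotents, `W` additive closed under `d`-extensions, and
let `X⁰ → ⋯ → Xᵈ → W → Σᵈ X⁰` be an Auslander–Reiten `(d+2)`-angle with
`W ∈ 𝒲`. If `ν : V ⟶ X⁰` is a `𝒲`-cover, then `V` is either zero or
indecomposable. -/
theorem stmt_14 {C : Type u} [Category.{v} C] [Preadditive C] [HasZeroObject C]
    [HasBinaryBiproducts C]
    (k : Type*) [Field k] [Linear k C]
    (homfin : ∀ X Y : C, FiniteDimensional k (X ⟶ Y))
    [IsIdempotentComplete C]
    {d : ℕ} (hd : 1 ≤ d)
    (T : DAngulated C d) (W : C → Prop)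
    (hWadd : IsAdditiveSubcat W) (hWext : ClosedUnderDExtensions T W)
    (E : DAngle C d T.S) (hAR : IsARAngle T E)
    (hW : W (E.X (d + 1)))
    (V : C) (ν : V ⟶ E.X 0) (hcov : IsWCover W ν) :
    IsZero V ∨ Indecomposable V := by
  by_cases hV : IsZero V
  · exact Or.inl hV
  refine Or.inr ⟨hV, fun V₁ V₂ i => ?_⟩
  by_contra hcon
  push_neg at hcon
  obtain ⟨hV₁, hV₂⟩ := hcon
  obtain ⟨hE, las, ras, -⟩ := hAR
  haveI : T.S.Additive := T.S_additive
  have hγ : E.conn ≠ 0 := T.conn_ne_zero E hE ras.1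
  set ι₁ : V₁ ⟶ V := biprod.inl ≫ i.inv with hdefι₁
  set ι₂ : V₂ ⟶ V := biprod.inr ≫ i.inv with hdefι₂
  set p₁ : V ⟶ V₁ := i.hom ≫ biprod.fst with hdefp₁
  set p₂ : V ⟶ V₂ := i.hom ≫ biprod.snd with hdefp₂
  have hι₁p₁ : ι₁ ≫ p₁ = 𝟙 V₁ := by
    rw [hdefι₁, hdefp₁, Category.assoc, Iso.inv_hom_id_assoc, biprod.inl_fst]
  have hι₂p₂ : ι₂ ≫ p₂ = 𝟙 V₂ := by
    rw [hdefι₂, hdefp₂, Category.assoc, Iso.inv_hom_id_assoc, biprod.inr_snd]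
  have hι₂p₁ : ι₂ ≫ p₁ = 0 := by
    rw [hdefι₂, hdefp₁, Category.assoc, Iso.inv_hom_id_assoc, biprod.inr_fst]
  clear_value ι₁ ι₂ p₁ p₂
  clear hdefι₁ hdefι₂ hdefp₁ hdefp₂
  have hne : ∀ (Vi : C) (ιi : Vi ⟶ V) (pi : V ⟶ Vi), ιi ≫ pi = 𝟙 Vi → ¬ IsZero Vi →
      ιi ≫ ν ≠ 0 := by
    intro Vi ιi pi hip hVi h
    have hmin : (𝟙 V - pi ≫ ιi) ≫ ν = ν := by
      rw [Preadditive.sub_comp, Category.id_comp, Category.assoc, h, comp_zero, sub_zero]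
    haveI := hcov.2 _ hmin
    have hzero : ιi ≫ (𝟙 V - pi ≫ ιi) = 0 := by
      rw [Preadditive.comp_sub, Category.comp_id, ← Category.assoc, hip,
        Category.id_comp, sub_self]
    have hι0 : ιi = 0 := by
      calc ιi = (ιi ≫ (𝟙 V - pi ≫ ιi)) ≫ inv (𝟙 V - pi ≫ ιi) := by
            rw [Category.assoc, IsIso.hom_inv_id, Category.comp_id]
        _ = 0 := by rw [hzero, zero_comp]
    exact hVi ((IsZero.iff_id_eq_zero Vi).mpr (by rw [← hip, hι0, zero_comp]))
  have hν₁ := hne V₁ ι₁ p₁ hι₁p₁ hV₁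
  have hν₂ := hne V₂ ι₂ p₂ hι₂p₂ hV₂
  obtain ⟨θ₁, hθ₁⟩ := T.star E hE las (ι₁ ≫ ν) hν₁
  obtain ⟨θ₂, hθ₂⟩ := T.star E hE las (ι₂ ≫ ν) hν₂
  have hχ : (θ₁ ≫ T.S.map ι₁ - θ₂ ≫ T.S.map ι₂) ≫ T.S.map ν = 0 := by
    rw [Preadditive.sub_comp, Category.assoc, Category.assoc, ← CategoryTheory.Functor.map_comp,
      ← CategoryTheory.Functor.map_comp, hθ₁, hθ₂, sub_self]
  have hχ0 : θ₁ ≫ T.S.map ι₁ - θ₂ ≫ T.S.map ι₂ = 0 :=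
    T.lemQ hd W hWext ν hcov hW _ hχ
  have heq : θ₁ ≫ T.S.map ι₁ = θ₂ ≫ T.S.map ι₂ := sub_eq_zero.mp hχ0
  have hθ10 : θ₁ = 0 := by
    calc θ₁ = θ₁ ≫ T.S.map (ι₁ ≫ p₁) := by rw [hι₁p₁, CategoryTheory.Functor.map_id, Category.comp_id]
      _ = (θ₁ ≫ T.S.map ι₁) ≫ T.S.map p₁ := by rw [CategoryTheory.Functor.map_comp, Category.assoc]
      _ = (θ₂ ≫ T.S.map ι₂) ≫ T.S.map p₁ := by rw [heq]
      _ = θ₂ ≫ T.S.map (ι₂ ≫ p₁) := by rw [CategoryTheory.Functor.map_comp, Category.assoc]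
      _ = 0 := by rw [hι₂p₁, CategoryTheory.Functor.map_zero, comp_zero]
  exact hγ (by rw [← hθ₁, hθ10, zero_comp])
end

section
/- Let $Y^0\to Y^1\to\cdots\to Y^d\to W\xrightarrow{\eta^{d+1}}\Sigma^d Y^0$ be an Auslander-Reiten $(d+2)$-angle in a $(d+2)$-angulated category $\mathcal{M}$, and let $U^0\in\mathcal{M}$. Then: (a) for every non-zero morphism $\delta:\Sigma^d U^0\to\Sigma^d Y^0$ there exists $\phi: W\to\Sigma^d U^0$ with $\delta\circ\phi=\eta^{d+1}$; (b) for every non-zero morphism $\phi: W\to\Sigma^d U^0$ there exists $\delta:\Sigma^d U^0\to\Sigma^d Y^0$ with $\delta\circ\phi=\eta^{d+1}$. -/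
open CategoryTheory CategoryTheory.Limits

universe v u

variable {C : Type u} [Category.{v} C] [Preadditive C]

/-- Let `Y⁰ → Y¹ → ⋯ → Yᵈ → W →^{ηᵈ⁺¹} Σᵈ Y⁰` be an Auslander–Reiten
`(d+2)`-angle in a `(d+2)`-angulated category and `U⁰` any object. Then:
(a) for every non-zero `δ : Σᵈ U⁰ ⟶ Σᵈ Y⁰` there is `φ : W ⟶ Σᵈ U⁰` with
`δ ∘ φ = ηᵈ⁺¹`; (b) for every non-zero `φ : W ⟶ Σᵈ U⁰` there is
`δ : Σᵈ U⁰ ⟶ Σᵈ Y⁰` with `δ ∘ φ = ηᵈ⁺¹`. -/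
theorem stmt_15 {C : Type u} [Category.{v} C] [Preadditive C]
    {d : ℕ} (hd : 1 ≤ d)
    (T : DAngulated C d) (E : DAngle C d T.S) (hAR : IsARAngle T E)
    (U0 : C) :
    (∀ δ : T.S.obj U0 ⟶ T.S.obj (E.X 0), δ ≠ 0 →
      ∃ φ : E.X (d + 1) ⟶ T.S.obj U0, φ ≫ δ = E.conn) ∧
    (∀ φ : E.X (d + 1) ⟶ T.S.obj U0, φ ≠ 0 →
      ∃ δ : T.S.obj U0 ⟶ T.S.obj (E.X 0), φ ≫ δ = E.conn) := by
  obtain ⟨hE, hL, hR, _⟩ := hAR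
  constructor
  · -- part (a)
    intro δ hδ
    obtain ⟨E', hE', h0, h1, hconn⟩ := T.extend δ
    -- the first morphism of E' composed with eqToHom is not a split mono
    have key : ¬ IsSplitMono (eqToHom h0.symm ≫ E'.mor 0) := by
      intro hsm
      apply hδ
      obtain ⟨⟨r, hr⟩⟩ := hsm
      have hsm' : E'.mor 0 ≫ (r ≫ eqToHom h0.symm) = 𝟙 (E'.X 0) := by
        have : eqToHom h0 ≫ ((eqToHom h0.symm ≫ E'.mor 0) ≫ r) ≫ eqToHom h0.symm
            = eqToHom h0 ≫ 𝟙 (E.X 0) ≫ eqToHom h0.symm := by rw [hr]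
        simpa using this
      have hzero : E'.conn = 0 := by
        have := (T.exact_contra_bot E' hE' (E'.X 0) (𝟙 (E'.X 0))).mpr
          ⟨r ≫ eqToHom h0.symm, hsm'⟩
        simpa using this
      have : δ = eqToHom h1.symm ≫ E'.conn ≫ eqToHom (congrArg T.S.obj h0) := by
        rw [hconn]; simp
      rw [this, hzero]; simp
    obtain ⟨h, hh⟩ := hL.2 (E'.X 1) trivial (eqToHom h0.symm ≫ E'.mor 0) key
    have hzero2 : E.conn ≫ T.S.map (eqToHom h0.symm ≫ E'.mor 0) = 0 :=
      (T.exact_contra_bot E hE (E'.X 1) (eqToHom h0.symm ≫ E'.mor 0)).mpr ⟨h, hh⟩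
    have hg : (E.conn ≫ eqToHom (congrArg T.S.obj h0.symm)) ≫ T.S.map (E'.mor 0) = 0 := by
      rw [Category.assoc, ← eqToHom_map T.S h0.symm, ← Functor.map_comp]
      exact hzero2
    obtain ⟨h', hh'⟩ := (T.exact_cov_shift E' hE' (E.X (d + 1))
      (E.conn ≫ eqToHom (congrArg T.S.obj h0.symm))).mp hg
    refine ⟨h' ≫ eqToHom h1, ?_⟩
    have : eqToHom h1 ≫ δ = E'.conn ≫ eqToHom (congrArg T.S.obj h0) := by
      rw [hconn]; simp
    rw [Category.assoc, this, ← Category.assoc, hh']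
    simp
  · -- part (b)
    intro φ hφ
    obtain ⟨F, hF, h0, h1, hconn⟩ := T.extend φ
    have key : ¬ IsSplitEpi (F.mor d ≫ eqToHom h1) := by
      intro hse
      apply hφ
      obtain ⟨⟨s, hs⟩⟩ := hse
      have hse' : (eqToHom h1 ≫ s) ≫ F.mor d = 𝟙 (F.X (d + 1)) := by
        have : eqToHom h1 ≫ (s ≫ F.mor d ≫ eqToHom h1) ≫ eqToHom h1.symm
            = eqToHom h1 ≫ 𝟙 (E.X (d + 1)) ≫ eqToHom h1.symm := by
          rw [hs]
        simpa using this
      have hzero : F.conn = 0 := by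
        have := (T.exact_cov_top F hF (F.X (d + 1)) (𝟙 (F.X (d + 1)))).mpr
          ⟨eqToHom h1 ≫ s, hse'⟩
        simpa using this
      have : φ = eqToHom h1.symm ≫ F.conn ≫ eqToHom (congrArg T.S.obj h0) := by
        rw [hconn]; simp
      rw [this, hzero]; simp
    obtain ⟨h, hh⟩ := hR.2 (F.X d) trivial (F.mor d ≫ eqToHom h1) key
    have hmd : E.mor d ≫ E.conn = 0 :=
      (T.exact_cov_top E hE (E.X d) (E.mor d)).mpr ⟨𝟙 _, by simp⟩
    have hzero2 : F.mor d ≫ (eqToHom h1 ≫ E.conn) = 0 := by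
      rw [← Category.assoc, ← hh, Category.assoc, hmd, Limits.comp_zero]
    obtain ⟨ψ, hψ⟩ := (T.exact_contra_top F hF (T.S.obj (E.X 0))
      (eqToHom h1 ≫ E.conn)).mp hzero2
    refine ⟨eqToHom (congrArg T.S.obj h0.symm) ≫ ψ, ?_⟩
    have hφ' : φ ≫ eqToHom (congrArg T.S.obj h0.symm) = eqToHom h1.symm ≫ F.conn := by
      rw [hconn]; simp
    calc φ ≫ eqToHom (congrArg T.S.obj h0.symm) ≫ ψ
        = (φ ≫ eqToHom (congrArg T.S.obj h0.symm)) ≫ ψ := by simp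
      _ = eqToHom h1.symm ≫ F.conn ≫ ψ := by rw [hφ']; simp
      _ = eqToHom h1.symm ≫ eqToHom h1 ≫ E.conn := by rw [hψ]
      _ = E.conn := by simp
end
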